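/- Let D₀ > 0 and β > 0. The derivative with respect to the dose D of the logarithm of the multi-target survival function S(D) = 1 − (1 − e^{−D/D₀})^β tends to −1/D₀ as D → ∞; in particular, this limit is independent of the number of targets β. -/

import Mathlib

open Real Filter Topology

/-!
With `u = exp (-D / D₀)` the chain rule gives
`(log S)' = -(1 / D₀) * (β * (1 - u) ^ (β - 1) * u / (1 - (1 - u) ^ β))`.
As `D → ∞`, `u → 0`, and since `1 - (1 - u) ^ β ~ β * u` the last factor tends to `1`.
-/

theorem tendsto_mul_div_of_hasDerivAt_zero {g g' : ℝ → ℝ} {c : ℝ} (hg0 : g 0 = 0)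
    (hg : HasDerivAt g c 0) (hc : c ≠ 0) (hg' : Tendsto g' (𝓝[≠] 0) (𝓝 c)) :
    Tendsto (fun t => g' t * t / g t) (𝓝[≠] 0) (𝓝 1) := by
  have hslope : Tendsto (fun t => g t / t) (𝓝[≠] 0) (𝓝 c) :=
    (hasDerivAt_iff_tendsto_slope.mp hg).congr fun t => by simp [slope_def_field, hg0]
  rw [← div_self hc]
  exact (hg'.div hslope hc).congr fun t => div_div_eq_mul_div _ _ _

theorem tendsto_mul_div_one_sub_one_sub_rpow {β : ℝ} (hβ : β ≠ 0) :
    Tendsto (fun t : ℝ => β * (1 - t) ^ (β - 1) * t / (1 - (1 - t) ^ β)) (𝓝[≠] 0) (𝓝 1) := by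
  refine tendsto_mul_div_of_hasDerivAt_zero (by simp) ?_ hβ ?_
  · simpa using ((hasDerivAt_id (0 : ℝ)).const_sub 1).rpow_const (p := β) (by simp) |>.const_sub 1
  · have hcont : ContinuousAt (fun t : ℝ => β * (1 - t) ^ (β - 1)) 0 :=
      continuousAt_const.mul ((continuousAt_const.sub continuousAt_id).rpow_const (by simp))
    simpa using hcont.tendsto.mono_left nhdsWithin_le_nhds

theorem tendsto_exp_neg_div_atTop_nhdsNE {D₀ : ℝ} (hD₀ : 0 < D₀) :
    Tendsto (fun x => exp (-x / D₀)) atTop (𝓝[≠] 0) :=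
  tendsto_nhdsWithin_of_tendsto_nhds_of_eventually_within _
    (tendsto_exp_atBot.comp (tendsto_neg_atTop_atBot.atBot_div_const hD₀))
    (.of_forall fun _ => (exp_pos _).ne')

noncomputable def mtSurvival (D₀ β D : ℝ) : ℝ := 1 - (1 - exp (-D / D₀)) ^ β

theorem exp_neg_div_lt_one {D₀ D : ℝ} (hD₀ : 0 < D₀) (hD : 0 < D) : exp (-D / D₀) < 1 :=
  exp_lt_one_iff.mpr (div_neg_of_neg_of_pos (neg_neg_of_pos hD) hD₀)

theorem mtSurvival_pos {D₀ β D : ℝ} (hD₀ : 0 < D₀) (hβ : 0 < β) (hD : 0 < D) :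
    0 < mtSurvival D₀ β D := by
  have hu := exp_neg_div_lt_one hD₀ hD
  have := rpow_lt_one (sub_pos.mpr hu).le (sub_lt_self 1 (exp_pos (-D / D₀))) hβ
  unfold mtSurvival; linarith

theorem hasDerivAt_log_mtSurvival {D₀ β D : ℝ} (hD₀ : 0 < D₀) (hβ : 0 < β) (hD : 0 < D) :
    HasDerivAt (fun x => log (mtSurvival D₀ β x))
      (-1 / D₀ * (β * (1 - exp (-D / D₀)) ^ (β - 1) * exp (-D / D₀) / mtSurvival D₀ β D)) D := by
  have hexp : HasDerivAt (fun x => exp (-x / D₀)) (exp (-D / D₀) * (-1 / D₀)) D := by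
    simpa using ((hasDerivAt_id D).neg.div_const D₀).exp
  have hbase : 1 - exp (-D / D₀) ≠ 0 := (sub_pos.mpr (exp_neg_div_lt_one hD₀ hD)).ne'
  have hS := ((hexp.const_sub 1).rpow_const (p := β) (Or.inl hbase)).const_sub 1
  convert hS.log (f := mtSurvival D₀ β) (mtSurvival_pos hD₀ hβ hD).ne' using 1
  ring

/-- For the multi-target survival model `S(D) = 1 - (1 - exp(-D/D₀))^β` with
`D₀ > 0` and `β > 0`, the derivative of `ln S` tends to `-1/D₀` as `D → ∞`;
in particular this limit is independent of `β`. -/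
theorem mt_log_deriv_tendsto (D₀ β : ℝ) (hD₀ : 0 < D₀) (hβ : 0 < β) :
    Tendsto
      (fun D : ℝ =>
        deriv (fun x : ℝ => Real.log (1 - (1 - Real.exp (-x / D₀)) ^ β)) D)
      atTop (nhds (-1 / D₀)) := by
  have hlim := ((tendsto_mul_div_one_sub_one_sub_rpow hβ.ne').comp
    (tendsto_exp_neg_div_atTop_nhdsNE hD₀)).const_mul (-1 / D₀)
  rw [mul_one] at hlim
  refine hlim.congr' ?_
  filter_upwards [eventually_gt_atTop 0] with D hD
  exact (hasDerivAt_log_mtSurvival hD₀ hβ hD).deriv.symm
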